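/- The intersection of the set of strictly incoherent operations with the set of coherence breaking channels equals the intersection of the set of dephasing-covariant incoherent operations with the set of coherence breaking channels, up to allowing permutations in the SIO case: every channel in SIO∩CBC has the form ρ ↦ ∑_k ρ_{kk} ∑_i |d_{ik}|² |π_i(k)⟩⟨π_i(k)|, which depends only on the diagonal of ρ. -/

import Mathlib

open Matrix ComplexOrder

/-- The dephasing map `Δ(ρ) = ∑_i ⟨i|ρ|i⟩ |i⟩⟨i|`. -/
def deph {d : ℕ} (ρ : Matrix (Fin d) (Fin d) ℂ) : Matrix (Fin d) (Fin d) ℂ :=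
  Matrix.diagonal fun i => ρ i i

/-- A quantum channel: admits a Kraus decomposition with the completeness relation. -/
def IsChannel {d : ℕ} (Φ : Matrix (Fin d) (Fin d) ℂ → Matrix (Fin d) (Fin d) ℂ) : Prop :=
  ∃ (N : ℕ) (K : Fin N → Matrix (Fin d) (Fin d) ℂ),
    (∑ n, (K n)ᴴ * K n = 1) ∧ ∀ ρ, Φ ρ = ∑ n, K n * ρ * (K n)ᴴ

/-- A dephasing-covariant operation (DIO): a channel commuting with the dephasing map. -/
def IsDIO {d : ℕ} (Φ : Matrix (Fin d) (Fin d) ℂ → Matrix (Fin d) (Fin d) ℂ) : Prop :=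
  IsChannel Φ ∧ ∀ ρ, deph (Φ ρ) = Φ (deph ρ)

/-- A strictly incoherent operation (SIO): a channel admitting a Kraus decomposition with
operators of the form `M_n = ∑_j d_{nj} |π_n(j)⟩⟨j|` for permutations `π_n`. -/
def IsSIO {d : ℕ} (Φ : Matrix (Fin d) (Fin d) ℂ → Matrix (Fin d) (Fin d) ℂ) : Prop :=
  ∃ (N : ℕ) (c : Fin N → Fin d → ℂ) (π : Fin N → Equiv.Perm (Fin d)),
    (∑ n, (Matrix.of fun a b => if a = π n b then c n b else 0)ᴴ *
        (Matrix.of fun a b => if a = π n b then c n b else 0) = 1) ∧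
    ∀ ρ, Φ ρ = ∑ n, (Matrix.of fun a b => if a = π n b then c n b else 0) * ρ *
        (Matrix.of fun a b => if a = π n b then c n b else 0)ᴴ

/-- A coherence breaking channel: an incoherent channel (Kraus operators mapping diagonal
matrices to diagonal matrices) whose output is diagonal on every density matrix. -/
def IsCBCfn {d : ℕ} (Φ : Matrix (Fin d) (Fin d) ℂ → Matrix (Fin d) (Fin d) ℂ) : Prop :=
  (∃ (N : ℕ) (K : Fin N → Matrix (Fin d) (Fin d) ℂ),
    (∑ n, (K n)ᴴ * K n = 1) ∧
    (∀ n (A : Matrix (Fin d) (Fin d) ℂ), A.IsDiag → (K n * A * (K n)ᴴ).IsDiag) ∧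
    ∀ ρ, Φ ρ = ∑ n, K n * ρ * (K n)ᴴ) ∧
  ∀ ρ : Matrix (Fin d) (Fin d) ℂ, ρ.PosSemidef → ρ.trace = 1 → (Φ ρ).IsDiag


/-!
A coherence breaking channel has diagonal outputs on all matrices, not only on states: it is
linear and the positive semidefinite matrices span `Matrix n n ℂ`. Hence `Φ = Δ ∘ Φ`.
For an SIO with Kraus operators `Mₙ = ∑_j c_{nj} |πₙ j⟩⟨j|` the diagonal of `Mₙ ρ Mₙᴴ` only sees the
diagonal of `ρ`, which yields the closed form and `Φ ∘ Δ = Φ = Δ ∘ Φ`. Conversely, for a DIO with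
diagonal outputs `Φ ρ = Φ (Δ ρ) = ∑_k ρ_kk Φ(|k⟩⟨k|)`, each `Φ(|k⟩⟨k|)` is a diagonal probability
vector `p(·|k)`, and this classical channel is an SIO with Kraus operators `√p(j|k) |j⟩⟨k|`, whose
permutation is the transposition of `j` and `k`.
-/

open scoped Matrix.Norms.L2Operator MatrixOrder in
theorem Matrix.span_posSemidef {n : Type*} [Fintype n] [DecidableEq n] :
    Submodule.span ℂ {A : Matrix n n ℂ | A.PosSemidef} = ⊤ := by
  simpa only [Matrix.nonneg_iff_posSemidef] using CStarAlgebra.span_nonneg (A := Matrix n n ℂ)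

section Kraus

variable {n ι : Type*} [Fintype n] [DecidableEq n] [Fintype ι]

def krausMap (K : ι → Matrix n n ℂ) : Matrix n n ℂ →ₗ[ℂ] Matrix n n ℂ where
  toFun ρ := ∑ i, K i * ρ * (K i)ᴴ
  map_add' ρ σ := by simp only [mul_add, add_mul, Finset.sum_add_distrib]
  map_smul' a ρ := by
    simp only [Matrix.mul_smul, Matrix.smul_mul, Finset.smul_sum, RingHom.id_apply]

lemma krausMap_apply (K : ι → Matrix n n ℂ) (ρ : Matrix n n ℂ) :
    krausMap K ρ = ∑ i, K i * ρ * (K i)ᴴ := rfl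

lemma posSemidef_krausMap (K : ι → Matrix n n ℂ) {ρ : Matrix n n ℂ} (hρ : ρ.PosSemidef) :
    (krausMap K ρ).PosSemidef :=
  Finset.sum_induction _ PosSemidef (fun _ _ hA hB => hA.add hB) PosSemidef.zero
    fun i _ => hρ.mul_mul_conjTranspose_same (K i)

lemma trace_krausMap {K : ι → Matrix n n ℂ} (hK : ∑ i, (K i)ᴴ * K i = 1) (ρ : Matrix n n ℂ) :
    (krausMap K ρ).trace = ρ.trace := by
  rw [krausMap_apply, trace_sum]
  simp only [trace_mul_cycle _ ρ]
  rw [← trace_sum, ← Finset.sum_mul, hK, one_mul]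

end Kraus

lemma isDiag_of_isDiag_on_densityMatrices {n : Type*} [Fintype n] [DecidableEq n]
    (L : Matrix n n ℂ →ₗ[ℂ] Matrix n n ℂ)
    (h : ∀ ρ : Matrix n n ℂ, ρ.PosSemidef → ρ.trace = 1 → (L ρ).IsDiag) (A : Matrix n n ℂ) :
    (L A).IsDiag := by
  have hpsd : ∀ A : Matrix n n ℂ, A.PosSemidef → (L A).IsDiag := by
    intro A hA
    rcases eq_or_ne A.trace 0 with h0 | h0
    · rw [hA.trace_eq_zero_iff.mp h0, map_zero]
      exact isDiag_zero
    · have hρ : (A.trace⁻¹ • A).PosSemidef := hA.smul (inv_nonneg.mpr hA.trace_nonneg)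
      have hdiag := (h _ hρ (by rw [trace_smul, smul_eq_mul, inv_mul_cancel₀ h0])).smul A.trace
      rwa [map_smul, smul_smul, mul_inv_cancel₀ h0, one_smul] at hdiag
  have hA : A ∈ Submodule.span ℂ {A : Matrix n n ℂ | A.PosSemidef} :=
    Matrix.span_posSemidef (n := n) ▸ Submodule.mem_top
  induction hA using Submodule.span_induction with
  | mem A hA => exact hpsd A hA
  | zero => rw [map_zero]; exact isDiag_zero
  | add A B _ _ hA hB => rw [map_add]; exact hA.add hB
  | smul c A _ hA => rw [map_smul]; exact hA.smul c

lemma IsCBCfn.isDiag {d : ℕ} {Φ : Matrix (Fin d) (Fin d) ℂ → Matrix (Fin d) (Fin d) ℂ}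
    (h : IsCBCfn Φ) (ρ : Matrix (Fin d) (Fin d) ℂ) : (Φ ρ).IsDiag := by
  obtain ⟨⟨N, K, -, -, hK⟩, hdiag⟩ := h
  obtain rfl : Φ = krausMap K := funext hK
  exact isDiag_of_isDiag_on_densityMatrices (krausMap K) hdiag ρ

section SIO

variable {n : Type*} [DecidableEq n]

def sioKraus (c : n → ℂ) (π : Equiv.Perm n) : Matrix n n ℂ :=
  of fun a b => if a = π b then c b else 0

lemma sioKraus_single_swap (j k : n) (s : ℂ) :
    sioKraus (Pi.single k s) (Equiv.swap j k) = single j k s := by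
  ext a b
  by_cases hb : b = k
  · subst hb
    simp [sioKraus, single_apply, eq_comm]
  · simp [sioKraus, hb, Ne.symm hb]

variable [Fintype n]

lemma sioKraus_mul_mul_conjTranspose_apply (c : n → ℂ) (π : Equiv.Perm n) (ρ : Matrix n n ℂ)
    (a b : n) :
    (sioKraus c π * ρ * (sioKraus c π)ᴴ) a b =
      c (π.symm a) * ρ (π.symm a) (π.symm b) * star (c (π.symm b)) := by
  simp [sioKraus, mul_apply, conjTranspose_apply, ← Equiv.symm_apply_eq, apply_ite]

lemma conjTranspose_sioKraus_mul_self (c : n → ℂ) (π : Equiv.Perm n) :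
    (sioKraus c π)ᴴ * sioKraus c π = diagonal fun k => (Complex.normSq (c k) : ℂ) := by
  ext a b
  rw [mul_apply, ← Equiv.sum_comp π]
  by_cases hab : a = b
  · subst hab
    simp [sioKraus, conjTranspose_apply, Complex.normSq_eq_conj_mul_self]
  · simp [sioKraus, conjTranspose_apply, hab, Ne.symm hab]

variable {ι : Type*} [Fintype ι]

lemma eq_sum_normSq_smul_single_of_isDiag {Φ : Matrix n n ℂ → Matrix n n ℂ} (c : ι → n → ℂ)
    (π : ι → Equiv.Perm n)
    (hΦ : ∀ ρ, Φ ρ = ∑ i, sioKraus (c i) (π i) * ρ * (sioKraus (c i) (π i))ᴴ)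
    (hdiag : ∀ ρ, (Φ ρ).IsDiag) (ρ : Matrix n n ℂ) :
    Φ ρ = ∑ k, ∑ i, (ρ k k * (Complex.normSq (c i k) : ℂ)) • single (π i k) (π i k) 1 := by
  ext a b
  simp only [Matrix.sum_apply, Matrix.smul_apply, single_apply, smul_ite, smul_zero]
  rcases eq_or_ne a b with rfl | hab
  · rw [hΦ, Matrix.sum_apply, Finset.sum_comm]
    refine Finset.sum_congr rfl fun i _ => ?_
    rw [sioKraus_mul_mul_conjTranspose_apply, ← Equiv.sum_comp (π i).symm]
    simp only [RCLike.star_def, Equiv.apply_symm_apply, and_self, Complex.normSq_eq_conj_mul_self,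
      smul_eq_mul, mul_one, Finset.sum_ite_eq', Finset.mem_univ, if_true]
    ring
  · rw [hdiag ρ hab]
    refine (Finset.sum_eq_zero fun k _ => Finset.sum_eq_zero fun i _ => if_neg ?_).symm
    rintro ⟨rfl, rfl⟩
    exact hab rfl

lemma sum_normSq_eq_one_of_sum_conjTranspose_sioKraus_mul_self {c : ι → n → ℂ}
    {π : ι → Equiv.Perm n}
    (hc : ∑ i, (sioKraus (c i) (π i))ᴴ * sioKraus (c i) (π i) = 1) (k : n) :
    ∑ i, Complex.normSq (c i k) = 1 := by
  have hkk := congrFun (congrFun hc k) k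
  simp only [Matrix.sum_apply, conjTranspose_sioKraus_mul_self, diagonal_apply_eq,
    one_apply_eq] at hkk
  exact_mod_cast hkk

end SIO

section Fin

variable {d : ℕ} {Φ : Matrix (Fin d) (Fin d) ℂ → Matrix (Fin d) (Fin d) ℂ}

lemma deph_eq_sum_smul_single (ρ : Matrix (Fin d) (Fin d) ℂ) :
    deph ρ = ∑ k, ρ k k • single k k (1 : ℂ) := by
  simp only [deph, smul_single, smul_eq_mul, mul_one, sum_single_eq_diagonal]

lemma IsSIO.isDIO_of_isDiag (hS : IsSIO Φ) (hdiag : ∀ ρ, (Φ ρ).IsDiag) : IsDIO Φ := by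
  obtain ⟨N, c, π, hc, hΦ⟩ := hS
  refine ⟨⟨N, _, hc, hΦ⟩, fun ρ => ?_⟩
  have hform := eq_sum_normSq_smul_single_of_isDiag c π hΦ hdiag
  calc deph (Φ ρ) = Φ ρ := (hdiag ρ).diagonal_diag
    _ = Φ (deph ρ) := by simp only [hform, deph, diagonal_apply_eq]

lemma isSIO_of_fintype {ι : Type*} [Fintype ι] (c : ι → Fin d → ℂ)
    (π : ι → Equiv.Perm (Fin d))
    (hc : ∑ i, (sioKraus (c i) (π i))ᴴ * sioKraus (c i) (π i) = 1)
    (hΦ : ∀ ρ, Φ ρ = ∑ i, sioKraus (c i) (π i) * ρ * (sioKraus (c i) (π i))ᴴ) : IsSIO Φ := by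
  let e := (Fintype.equivFin ι).symm
  refine ⟨Fintype.card ι, c ∘ e, π ∘ e, ?_, fun ρ => ?_⟩
  · exact (Equiv.sum_comp e fun i => (sioKraus (c i) (π i))ᴴ * sioKraus (c i) (π i)).trans hc
  · exact (hΦ ρ).trans
      (Equiv.sum_comp e fun i => sioKraus (c i) (π i) * ρ * (sioKraus (c i) (π i))ᴴ).symm

lemma isSIO_of_eq_sum_smul_diagonal (p : Fin d → Fin d → ℝ) (hp : ∀ j k, 0 ≤ p j k)
    (hp1 : ∀ k, ∑ j, p j k = 1)
    (hΦ : ∀ ρ, Φ ρ = ∑ k, ρ k k • diagonal fun j => (p j k : ℂ)) : IsSIO Φ := by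
  have hs : ∀ j k, ((√(p j k) : ℝ) : ℂ) * (√(p j k) : ℝ) = p j k := fun j k => by
    rw [← Complex.ofReal_mul, Real.mul_self_sqrt (hp j k)]
  refine isSIO_of_fintype (fun jk : Fin d × Fin d => Pi.single jk.2 (√(p jk.1 jk.2) : ℂ))
    (fun jk : Fin d × Fin d => Equiv.swap jk.1 jk.2) ?_ fun ρ => ?_
  · ext a b
    simp only [sioKraus_single_swap, conjTranspose_single, single_mul_single_same, Matrix.sum_apply,
      Fintype.sum_prod_type, single_apply, one_apply, Complex.star_def, Complex.conj_ofReal, hs]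
    rcases eq_or_ne a b with rfl | hab
    · simp [← Complex.ofReal_sum, hp1]
    · exact (Finset.sum_eq_zero fun _ _ => Finset.sum_eq_zero fun _ _ =>
        if_neg fun h => hab (h.1.symm.trans h.2)).trans (if_neg hab).symm
  · ext a b
    simp only [hΦ, sioKraus_single_swap, conjTranspose_single, single_mul_mul_single,
      Matrix.sum_apply, Fintype.sum_prod_type, single_apply, Matrix.smul_apply, diagonal_apply,
      Complex.star_def, Complex.conj_ofReal]
    rcases eq_or_ne a b with rfl | hab
    · rw [Fintype.sum_eq_single a fun j hj => Finset.sum_eq_zero fun k _ => if_neg fun h => hj h.1]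
      simp only [and_self, if_true, smul_eq_mul]
      exact Finset.sum_congr rfl fun k _ => by rw [mul_right_comm, hs, mul_comm]
    · rw [Finset.sum_eq_zero fun k _ => by rw [if_neg hab, smul_zero]]
      exact (Finset.sum_eq_zero fun _ _ => Finset.sum_eq_zero fun _ _ =>
        if_neg fun h => hab (h.1.symm.trans h.2)).symm

lemma IsDIO.exists_eq_sum_smul_diagonal (hD : IsDIO Φ) (hdiag : ∀ ρ, (Φ ρ).IsDiag) :
    ∃ p : Fin d → Fin d → ℝ, (∀ j k, 0 ≤ p j k) ∧ (∀ k, ∑ j, p j k = 1) ∧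
      ∀ ρ, Φ ρ = ∑ k, ρ k k • diagonal fun j => (p j k : ℂ) := by
  obtain ⟨⟨N, K, hK, hΦK⟩, hdeph⟩ := hD
  obtain rfl : Φ = krausMap K := funext hΦK
  set E : Fin d → Matrix (Fin d) (Fin d) ℂ := fun k => krausMap K (single k k 1)
  have hE_nonneg : ∀ j k, 0 ≤ E k j j := fun j k =>
    (posSemidef_krausMap K (diagonal_single k (1 : ℂ) ▸ PosSemidef.diagonal
      (Pi.single_nonneg.mpr zero_le_one))).diag_nonneg
  have hE : ∀ k, E k = diagonal fun j => ((E k j j).re : ℂ) := fun k =>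
    calc E k = diagonal (E k).diag := (hdiag _).diagonal_diag.symm
      _ = _ := congrArg diagonal <| funext fun j =>
        Complex.eq_re_of_ofReal_le (r := 0) (by rw [Complex.ofReal_zero]; exact hE_nonneg j k)
  refine ⟨fun j k => (E k j j).re, fun j k => (Complex.nonneg_iff.mp (hE_nonneg j k)).1,
    fun k => ?_, fun ρ => ?_⟩
  · have htr : (E k).trace = 1 := (trace_krausMap hK _).trans (trace_single_eq_same k 1)
    simpa only [trace, diag_apply, Complex.re_sum, Complex.one_re] using congrArg Complex.re htr
  · calc krausMap K ρ = deph (krausMap K ρ) := ((hdiag ρ).diagonal_diag).symm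
      _ = krausMap K (deph ρ) := hdeph ρ
      _ = ∑ k, ρ k k • E k := by rw [deph_eq_sum_smul_single, map_sum]; simp only [map_smul, E]
      _ = _ := by simp only [← hE]

lemma IsDIO.isSIO_of_isDiag (hD : IsDIO Φ) (hdiag : ∀ ρ, (Φ ρ).IsDiag) : IsSIO Φ := by
  obtain ⟨p, hp, hp1, hΦ⟩ := hD.exists_eq_sum_smul_diagonal hdiag
  exact isSIO_of_eq_sum_smul_diagonal p hp hp1 hΦ

end Fin

/-- `SIO ∩ CBC = DIO ∩ CBC`, and every channel in `SIO ∩ CBC` has the form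
`ρ ↦ ∑_k ρ_{kk} ∑_n |d_{nk}|² |π_n(k)⟩⟨π_n(k)|` (with `∑_n |d_{nk}|² = 1`), which depends
only on the diagonal of `ρ`. -/
theorem sio_cap_cbc_eq_dio_cap_cbc (d : ℕ)
    (Φ : Matrix (Fin d) (Fin d) ℂ → Matrix (Fin d) (Fin d) ℂ) :
    ((IsSIO Φ ∧ IsCBCfn Φ) ↔ (IsDIO Φ ∧ IsCBCfn Φ)) ∧
    ((IsSIO Φ ∧ IsCBCfn Φ) →
      ∃ (N : ℕ) (c : Fin N → Fin d → ℂ) (π : Fin N → Equiv.Perm (Fin d)),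
        (∀ k, ∑ n, Complex.normSq (c n k) = 1) ∧
        (∀ ρ, Φ ρ = ∑ k, ∑ n, (ρ k k * (Complex.normSq (c n k) : ℂ)) •
          Matrix.single (π n k) (π n k) (1 : ℂ)) ∧
        ∀ ρ σ : Matrix (Fin d) (Fin d) ℂ, (∀ k, ρ k k = σ k k) → Φ ρ = Φ σ) := by
  refine ⟨⟨fun ⟨hS, hC⟩ => ⟨hS.isDIO_of_isDiag hC.isDiag, hC⟩,
    fun ⟨hD, hC⟩ => ⟨hD.isSIO_of_isDiag hC.isDiag, hC⟩⟩, ?_⟩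
  rintro ⟨⟨N, c, π, hc, hΦ⟩, hC⟩
  have hform := eq_sum_normSq_smul_single_of_isDiag c π hΦ hC.isDiag
  exact ⟨N, c, π, sum_normSq_eq_one_of_sum_conjTranspose_sioKraus_mul_self hc, hform,
    fun ρ σ h => by simp only [hform, h]⟩
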